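/- arXiv:2006.12049 — 3 statements merged into one kernel-verified Lean document; each statement's English description precedes it below -/
import Mathlib

section
/- For positive reals $p, \sigma_A^2, \sigma_B^2, \sigma_E^2$ and $\rho \in \mathbb{C}$ with $|\rho| \le 1$, define the Hermitian matrices $C_{AB} = \begin{pmatrix} p+\sigma_A^2 & p \\ p & p+\sigma_B^2\end{pmatrix}$, $C_{AE} = \begin{pmatrix} p+\sigma_A^2 & \rho p \\ \bar\rho p & p+\sigma_E^2\end{pmatrix}$, $C_{BE} = \begin{pmatrix} p+\sigma_B^2 & \rho p \\ \bar\rho p & p+\sigma_E^2\end{pmatrix}$, and $C_{ABE} = \begin{pmatrix} p+\sigma_A^2 & p & \rho p \\ p & p+\sigma_B^2 & \rho p \\ \bar\rho p & \bar\rho p & p+\sigma_E^2 \end{pmatrix}$. Then $\det(C_{AE})\det(C_{BE})\det(C_{AB}) \le (p+\sigma_A^2)(p+\sigma_B^2)(p+\sigma_E^2)\det(C_{ABE})$. -/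
/-!
All four determinants are real and depend on `ρ` only through `s = ‖ρ p‖² ∈ [0, p²]`.
With `a, b, c` the diagonal entries, the difference of the two sides is then a polynomial
in `s`, `p`, `a - p`, `b - p`, `c - p` that is a sum of visibly nonnegative terms, each
carrying a factor `s`: for `s = 0` the inequality is an equality.
-/

open Complex

theorem det_hermitian_fin_two (a b : ℝ) (w : ℂ) :
    !![(a : ℂ), w; (starRingEnd ℂ) w, (b : ℂ)].det = ((a * b - normSq w : ℝ) : ℂ) := by
  rw [Matrix.det_fin_two_of, mul_conj]
  push_cast
  ring

theorem det_hermitian_fin_three (a b c r : ℝ) (w : ℂ) :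
    !![(a : ℂ), (r : ℂ), w; (r : ℂ), (b : ℂ), w;
        (starRingEnd ℂ) w, (starRingEnd ℂ) w, (c : ℂ)].det
      = ((a * b * c - r ^ 2 * c - normSq w * (a + b - 2 * r) : ℝ) : ℂ) := by
  rw [Matrix.det_fin_three]
  simp only [Matrix.of_apply, Matrix.cons_val', Matrix.cons_val_zero, Matrix.cons_val_one,
    Matrix.head_cons, Matrix.empty_val', Matrix.cons_val_fin_one, Matrix.head_fin_const,
    Matrix.cons_val_two, Matrix.tail_cons]
  push_cast
  linear_combination (2 * (r : ℂ) - a - b) * mul_conj w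

theorem mul_det_minors_le {p a b c s : ℝ} (hp : 0 ≤ p) (ha : p ≤ a) (hb : p ≤ b) (hc : p ≤ c)
    (hs : 0 ≤ s) (hsp : s ≤ p ^ 2) :
    (a * c - s) * (b * c - s) * (a * b - p ^ 2)
      ≤ a * b * c * (a * b * c - p ^ 2 * c - s * (a + b - 2 * p)) := by
  have hdiff : a * b * c * (a * b * c - p ^ 2 * c - s * (a + b - 2 * p))
        - (a * c - s) * (b * c - s) * (a * b - p ^ 2)
      = s * p * (c - p) * (2 * (a - p) * (b - p) + p * ((a - p) + (b - p)))
        + s * (2 * p ^ 2 - s) * (a - p) * (b - p)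
        + s * (p ^ 2 - s) * p * ((a - p) + (b - p)) := by
    ring
  have hx : 0 ≤ a - p := sub_nonneg.2 ha
  have hy : 0 ≤ b - p := sub_nonneg.2 hb
  have hz : 0 ≤ c - p := sub_nonneg.2 hc
  have ht : 0 ≤ p ^ 2 - s := sub_nonneg.2 hsp
  have ht' : 0 ≤ 2 * p ^ 2 - s := by linarith
  rw [← sub_nonneg, hdiff]
  bound

open Matrix Complex in
open scoped ComplexOrder in
theorem stmt_0 (p sA2 sB2 sE2 : ℝ) (hp : 0 < p) (hA : 0 < sA2) (hB : 0 < sB2)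
    (hE : 0 < sE2) (ρ : ℂ) (hρ : ‖ρ‖ ≤ 1) :
    (!![((p + sA2 : ℝ) : ℂ), ρ * p; (starRingEnd ℂ) ρ * p, ((p + sE2 : ℝ) : ℂ)] :
          Matrix (Fin 2) (Fin 2) ℂ).det
      * (!![((p + sB2 : ℝ) : ℂ), ρ * p; (starRingEnd ℂ) ρ * p, ((p + sE2 : ℝ) : ℂ)] :
          Matrix (Fin 2) (Fin 2) ℂ).det
      * (!![((p + sA2 : ℝ) : ℂ), (p : ℂ); (p : ℂ), ((p + sB2 : ℝ) : ℂ)] :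
          Matrix (Fin 2) (Fin 2) ℂ).det
    ≤ ((p + sA2 : ℝ) : ℂ) * ((p + sB2 : ℝ) : ℂ) * ((p + sE2 : ℝ) : ℂ)
      * (!![((p + sA2 : ℝ) : ℂ), (p : ℂ), ρ * p;
            (p : ℂ), ((p + sB2 : ℝ) : ℂ), ρ * p;
            (starRingEnd ℂ) ρ * p, (starRingEnd ℂ) ρ * p, ((p + sE2 : ℝ) : ℂ)] :
          Matrix (Fin 3) (Fin 3) ℂ).det := by
  have hAB := det_hermitian_fin_two (p + sA2) (p + sB2) p
  rw [conj_ofReal, normSq_ofReal, ← sq] at hAB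
  have hstar : (starRingEnd ℂ) ρ * p = (starRingEnd ℂ) (ρ * p) := by
    rw [map_mul, conj_ofReal]
  rw [hstar, det_hermitian_fin_two, det_hermitian_fin_two, hAB, det_hermitian_fin_three]
  have hs : normSq (ρ * p) ≤ p ^ 2 := by
    rw [normSq_eq_norm_sq, norm_mul, norm_real, Real.norm_of_nonneg hp.le, mul_pow]
    exact mul_le_of_le_one_left (by positivity) (pow_le_one₀ (norm_nonneg ρ) hρ)
  have key := mul_det_minors_le hp.le (le_add_of_nonneg_right hA.le)
    (le_add_of_nonneg_right hB.le) (le_add_of_nonneg_right hE.le) (normSq_nonneg _) hs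
  exact_mod_cast key
end

section
/- Let $p, \sigma_A^2, \sigma_B^2, \sigma_E^2 > 0$ and $|\rho| \le 1$. Define $L(\sigma_A^2,\sigma_B^2,\sigma_E^2) = \log_2\left(1+\frac{p}{\sigma_A^2+\sigma_B^2+\sigma_A^2\sigma_B^2/p}\right) - \log_2\left(1+\frac{p|\rho|^2}{p(1-|\rho|^2)+\max(\sigma_A^2,\sigma_B^2)+\sigma_E^2+\max(\sigma_A^2,\sigma_B^2)\sigma_E^2/p}\right)$. Then $L > 0$ if and only if $\sigma_E^2 > p(|\rho|^2 - 1) + |\rho|^2 \min(\sigma_A^2, \sigma_B^2)$. -/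
/-!
Since `logb 2` is strictly increasing, `L > 0` says that the SNR of the legitimate channel exceeds
that of the eavesdropper. Writing `M` and `m` for the larger and smaller of the noise variances of
Alice and Bob, clearing denominators turns this into the sign of
`(p + M) * (σ_E² - (p (ρ² - 1) + ρ² m))`, and `p + M > 0`.
-/

open Real

lemma mul_snr_sub_mul_snr_eq (p M m E r : ℝ) (hp : p ≠ 0) :
    p * (p * (1 - r ^ 2) + M + E + M * E / p) - r ^ 2 * (p * (m + M + m * M / p))
      = (p + M) * (E - (p * (r ^ 2 - 1) + r ^ 2 * m)) := by
  field_simp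
  ring

lemma mul_sq_div_lt_div_iff {p r D S : ℝ} (hD : 0 < D) (hS : 0 < S) :
    p * r ^ 2 / D < p / S ↔ 0 < p * D - r ^ 2 * (p * S) := by
  rw [div_lt_div_iff₀ hD hS, sub_pos]
  constructor <;> intro h <;> linarith

lemma eve_snr_lt_snr_iff {p M m E r : ℝ} (hp : 0 < p) (hm : 0 < m) (hM : 0 < M) (hE : 0 < E)
    (hr : r ^ 2 ≤ 1) :
    p * r ^ 2 / (p * (1 - r ^ 2) + M + E + M * E / p) < p / (m + M + m * M / p)
      ↔ p * (r ^ 2 - 1) + r ^ 2 * m < E := by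
  have hD : 0 < p * (1 - r ^ 2) + M + E + M * E / p := by
    positivity
  rw [mul_sq_div_lt_div_iff hD (by positivity), mul_snr_sub_mul_snr_eq p M m E r hp.ne',
    mul_pos_iff_of_pos_left (by positivity), sub_pos]

theorem stmt_5 (p sA2 sB2 sE2 r : ℝ) (hp : 0 < p) (hA : 0 < sA2) (hB : 0 < sB2)
    (hE : 0 < sE2) (hr0 : 0 ≤ r) (hr1 : r ≤ 1) :
    0 < Real.logb 2 (1 + p / (sA2 + sB2 + sA2 * sB2 / p))
        - Real.logb 2 (1 + p * r^2
            / (p * (1 - r^2) + max sA2 sB2 + sE2 + max sA2 sB2 * sE2 / p))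
      ↔ sE2 > p * (r^2 - 1) + r^2 * min sA2 sB2 := by
  have hr : r ^ 2 ≤ 1 := pow_le_one₀ hr0 hr1
  have hm : 0 < min sA2 sB2 := lt_min hA hB
  have hM : 0 < max sA2 sB2 := lt_max_of_lt_left hA
  have hEve : 0 < 1 + p * r ^ 2
      / (p * (1 - r ^ 2) + max sA2 sB2 + sE2 + max sA2 sB2 * sE2 / p) := by
    positivity
  rw [← min_add_max sA2 sB2, ← min_mul_max sA2 sB2, sub_pos,
    logb_lt_logb_iff one_lt_two hEve (by positivity), add_lt_add_iff_left]
  exact eve_snr_lt_snr_iff hp hm hM hE hr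
end

section
/- Fix $p > 0$, $|\rho| < 1$, and positive constants $c_B, c_E$. As $\sigma_A^2 \to 0^+$ with $\sigma_B^2 = c_B\sigma_A^2$ and $\sigma_E^2 = c_E\sigma_A^2$, both the lower bound $L = \log_2\left(1+\frac{p}{\sigma_A^2+\sigma_B^2+\sigma_A^2\sigma_B^2/p}\right) - \log_2\left(1+\frac{p|\rho|^2}{p(1-|\rho|^2)+\max(\sigma_A^2,\sigma_B^2)+\sigma_E^2+\max(\sigma_A^2,\sigma_B^2)\sigma_E^2/p}\right)$ and the upper bound $U = \log_2\left(\frac{[(p+\sigma_A^2)(p+\sigma_E^2)-|\rho|^2p^2][(p+\sigma_B^2)(p+\sigma_E^2)-|\rho|^2p^2]}{(p+\sigma_E^2)[(p(\sigma_A^2+\sigma_B^2)+\sigma_A^2\sigma_B^2)(p+\sigma_E^2)-|\rho|^2p^2(\sigma_A^2+\sigma_B^2)]}\right)$ satisfy $L - \log_2\left(\frac{p(1-|\rho|^2)}{\sigma_A^2+\sigma_B^2}\right) \to 0$ and $U - \log_2\left(\frac{p(1-|\rho|^2)}{\sigma_A^2+\sigma_B^2}\right) \to 0$. -/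
/-!
Put `s = σ_A²`. The upper bound and the first logarithm of the lower bound are logarithms of
rational functions of `s` with a simple pole at `0`, as is the main term
`p (1 - ρ²) / (σ_A² + σ_B²)`. Dividing by the main term cancels the pole and leaves a function
continuous at `0`, with value `1` for the upper bound and `1 / (1 - ρ²)` for the lower one. The
second logarithm of the lower bound is continuous at `0` with value `log (1 / (1 - ρ²))`, which
cancels the latter.
-/

open Filter Topology Real

/-- The paper's `L`, with `a = σ_A²`, `b = σ_B²`, `e = σ_E²` and `r = |ρ|`; `secretKeyUpperBound`
is its `U` in the same notation. -/
noncomputable def secretKeyLowerBound (p r a b e : ℝ) : ℝ :=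
  logb 2 (1 + p / (a + b + a * b / p))
    - logb 2 (1 + p * r ^ 2 / (p * (1 - r ^ 2) + max a b + e + max a b * e / p))

noncomputable def secretKeyUpperBound (p r a b e : ℝ) : ℝ :=
  logb 2 (((p + a) * (p + e) - r ^ 2 * p ^ 2) * ((p + b) * (p + e) - r ^ 2 * p ^ 2)
    / ((p + e) * ((p * (a + b) + a * b) * (p + e) - r ^ 2 * p ^ 2 * (a + b))))

theorem tendsto_logb_sub_logb {α : Type*} {l : Filter α} {b c : ℝ} {f g : α → ℝ} (hc : c ≠ 0)
    (hg : ∀ᶠ x in l, g x ≠ 0) (h : Tendsto (fun x => f x / g x) l (𝓝 c)) :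
    Tendsto (fun x => logb b (f x) - logb b (g x)) l (𝓝 (logb b c)) := by
  refine ((continuousAt_logb hc).tendsto.comp h).congr' ?_
  filter_upwards [hg, h.eventually_ne hc] with x hgx hfgx
  exact logb_div (div_ne_zero_iff.1 hfgx).1 hgx

section HighSNR

variable {p r cB cE : ℝ}

theorem eventually_div_add_mul_self_ne_zero {c : ℝ} (hc : 0 < c) (hcB : 0 ≤ cB) :
    ∀ᶠ s in 𝓝[>] (0 : ℝ), c / (s + cB * s) ≠ 0 := by
  filter_upwards [self_mem_nhdsWithin] with s (hs : 0 < s)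
  positivity

theorem tendsto_secretKeyLowerBound_sub_logb (hp : 0 < p) (hr : r ^ 2 < 1) (hcB : 0 ≤ cB) :
    Tendsto (fun s => secretKeyLowerBound p r s (cB * s) (cE * s)
      - logb 2 (p * (1 - r ^ 2) / (s + cB * s))) (𝓝[>] 0) (𝓝 0) := by
  have hq : 0 < 1 - r ^ 2 := by linarith
  have hfirst : Tendsto (fun s => (1 + p / (s + cB * s + s * (cB * s) / p))
      / (p * (1 - r ^ 2) / (s + cB * s))) (𝓝[>] 0) (𝓝 (1 / (1 - r ^ 2))) := by
    set ψ : ℝ → ℝ := fun s =>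
      (s * (1 + cB) + p ^ 2 * (1 + cB) / (p * (1 + cB) + cB * s)) / (p * (1 - r ^ 2))
    have hψ : ContinuousAt ψ 0 := by fun_prop (disch := positivity)
    have hψ0 : ψ 0 = 1 / (1 - r ^ 2) := by
      simp only [ψ]; field_simp; ring
    refine tendsto_nhdsWithin_congr (fun s (hs : 0 < s) => ?_)
      (hψ0 ▸ hψ.tendsto.mono_left nhdsWithin_le_nhds)
    simp only [ψ]
    field_simp
  have hsecond : Tendsto (fun s => logb 2 (1 + p * r ^ 2 / (p * (1 - r ^ 2) + max s (cB * s)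
      + cE * s + max s (cB * s) * (cE * s) / p))) (𝓝[>] 0) (𝓝 (logb 2 (1 / (1 - r ^ 2)))) := by
    set B : ℝ → ℝ := fun s => 1 + p * r ^ 2 / (p * (1 - r ^ 2) + max s (cB * s)
      + cE * s + max s (cB * s) * (cE * s) / p)
    have hB0 : B 0 = 1 / (1 - r ^ 2) := by
      simp only [B, mul_zero, max_self, add_zero, zero_div]
      field_simp
      ring
    have hB : ContinuousAt (fun s => logb 2 (B s)) 0 :=
      ContinuousAt.logb (by fun_prop (disch := simp [hp.ne', hq.ne'])) (by rw [hB0]; positivity)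
    simpa only [hB0] using hB.tendsto.mono_left nhdsWithin_le_nhds
  have := (tendsto_logb_sub_logb (b := 2) (by positivity)
    (eventually_div_add_mul_self_ne_zero (by positivity) hcB) hfirst).sub hsecond
  rw [sub_self] at this
  refine this.congr fun s => ?_
  simp only [secretKeyLowerBound]
  ring

theorem tendsto_secretKeyUpperBound_sub_logb (hp : 0 < p) (hr : r ^ 2 < 1)
    (hcB : 0 ≤ cB) (hcE : 0 ≤ cE) :
    Tendsto (fun s => secretKeyUpperBound p r s (cB * s) (cE * s)
      - logb 2 (p * (1 - r ^ 2) / (s + cB * s))) (𝓝[>] 0) (𝓝 0) := by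
  have hq : 0 < 1 - r ^ 2 := by linarith
  set M : ℝ → ℝ := fun s => (p * (1 + cB) + cB * s) * (p + cE * s) - r ^ 2 * p ^ 2 * (1 + cB)
  have hM : ∀ s, M s = p ^ 2 * (1 + cB) * (1 - r ^ 2) + (p * (1 + cB) * cE + cB * p) * s
      + cB * cE * s ^ 2 := fun s => by simp only [M]; ring
  have hM0 : M 0 = p ^ 2 * (1 + cB) * (1 - r ^ 2) := by simp [hM]
  set ψ : ℝ → ℝ := fun s =>
    ((p + s) * (p + cE * s) - r ^ 2 * p ^ 2) * ((p + cB * s) * (p + cE * s) - r ^ 2 * p ^ 2)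
      * (1 + cB) / ((p + cE * s) * M s * (p * (1 - r ^ 2)))
  have hψ : ContinuousAt ψ 0 :=
    ContinuousAt.div (by fun_prop) (by fun_prop)
      (by simp only [hM0, mul_zero, add_zero]; positivity)
  have hψ0 : ψ 0 = 1 := by
    simp only [ψ, hM0, mul_zero, add_zero]; field_simp
  have hratio : Tendsto (fun s => ((p + s) * (p + cE * s) - r ^ 2 * p ^ 2)
      * ((p + cB * s) * (p + cE * s) - r ^ 2 * p ^ 2) / ((p + cE * s)
      * ((p * (s + cB * s) + s * (cB * s)) * (p + cE * s) - r ^ 2 * p ^ 2 * (s + cB * s)))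
      / (p * (1 - r ^ 2) / (s + cB * s))) (𝓝[>] 0) (𝓝 1) := by
    refine tendsto_nhdsWithin_congr (fun s (hs : 0 < s) => ?_)
      (hψ0 ▸ hψ.tendsto.mono_left nhdsWithin_le_nhds)
    have hMs : 0 < M s := by rw [hM]; positivity
    rw [show (p * (s + cB * s) + s * (cB * s)) * (p + cE * s) - r ^ 2 * p ^ 2 * (s + cB * s)
      = s * M s by simp only [M]; ring]
    simp only [ψ]
    field_simp
  simpa only [secretKeyUpperBound, logb_one] using tendsto_logb_sub_logb (b := 2) one_ne_zero
    (eventually_div_add_mul_self_ne_zero (by positivity) hcB) hratio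

end HighSNR

open Filter Topology in
theorem stmt_6 (p r cB cE : ℝ) (hp : 0 < p) (hr0 : 0 ≤ r) (hr : r < 1)
    (hcB : 0 < cB) (hcE : 0 < cE) :
    Tendsto (fun sA2 : ℝ =>
        (Real.logb 2 (1 + p / (sA2 + cB * sA2 + sA2 * (cB * sA2) / p))
          - Real.logb 2 (1 + p * r^2
              / (p * (1 - r^2) + max sA2 (cB * sA2) + cE * sA2
                  + max sA2 (cB * sA2) * (cE * sA2) / p)))
        - Real.logb 2 (p * (1 - r^2) / (sA2 + cB * sA2)))
      (𝓝[>] 0) (𝓝 0)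
    ∧ Tendsto (fun sA2 : ℝ =>
        Real.logb 2 (((p + sA2) * (p + cE * sA2) - r^2 * p^2)
            * ((p + cB * sA2) * (p + cE * sA2) - r^2 * p^2)
          / ((p + cE * sA2)
              * ((p * (sA2 + cB * sA2) + sA2 * (cB * sA2)) * (p + cE * sA2)
                  - r^2 * p^2 * (sA2 + cB * sA2))))
        - Real.logb 2 (p * (1 - r^2) / (sA2 + cB * sA2)))
      (𝓝[>] 0) (𝓝 0) := by
  have hr2 : r ^ 2 < 1 := pow_lt_one₀ hr0 hr two_ne_zero
  exact ⟨tendsto_secretKeyLowerBound_sub_logb hp hr2 hcB.le,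
    tendsto_secretKeyUpperBound_sub_logb hp hr2 hcB.le hcE.le⟩
end
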